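/- Let H be an RKHS with smooth kernel, f : Ω → Ω with densely defined Koopman operator C_f, p a fixed point of f, and assume V_p = ∪_n V_{p,n} ⊆ D(C_f), where V_{p,n} is the span of kernel derivatives at p of order ≤ n. If the sequence of operator norms ‖C_f|_{V_{p,n}}‖ (n = 1, 2, ...) is bounded, then C_f extends to a bounded operator on H; conversely if C_f is bounded then the sequence is bounded. -/

import Mathlib

open scoped BigOperators

noncomputable def pderiv' {d : ℕ} (i : Fin d)
    (h : (Fin d → ℝ) → ℂ) : (Fin d → ℝ) → ℂ :=
  fun x => fderiv ℝ h x (Pi.single i 1)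

noncomputable def pIter' {d : ℕ} (i : Fin d) :
    ℕ → ((Fin d → ℝ) → ℂ) → ((Fin d → ℝ) → ℂ)
  | 0, h => h
  | n + 1, h => pderiv' i (pIter' i n h)

/-- The multi-index partial derivative `∂^α h` on `ℝ^d`. -/
noncomputable def mDeriv' {d : ℕ} (α : Fin d → ℕ)
    (h : (Fin d → ℝ) → ℂ) : (Fin d → ℝ) → ℂ :=
  (List.finRange d).foldr (fun i g => pIter' i (α i) g) h
/-- Let `H` be an RKHS on `ℝ^d` with smooth kernel (realized via `Φ`,
kernel sections `kfun`), `f` a map with fixed point `p` inducing the densely defined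
Koopman operator `T = C_f` (with its maximal domain), and let
`V_{p,n} = span{w α : |α| ≤ n}` be the spans of the kernel derivative sections at `p`,
with `V_p = span{w α : α}` contained in `D(C_f)` and dense in `H`.  Then the sequence of
operator norms `‖C_f|_{V_{p,n}}‖` is uniformly bounded if and only if `C_f` extends to a
bounded operator on `H`. -/
theorem koopman_bounded_iff_uniform_bound_on_jets
    {d : ℕ}
    (H : Type*) [NormedAddCommGroup H] [InnerProductSpace ℂ H] [CompleteSpace H]
    (Φ : H →ₗ[ℂ] ((Fin d → ℝ) → ℂ)) (hinj : Function.Injective Φ)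
    (kfun : (Fin d → ℝ) → H)
    (hrepro : ∀ (h : H) (x : Fin d → ℝ), Φ h x = (inner ℂ (kfun x) h : ℂ))
    (f : (Fin d → ℝ) → (Fin d → ℝ)) (p : Fin d → ℝ) (hfp : f p = p)
    (T : H →ₗ.[ℂ] H)
    (hdense : Dense (T.domain : Set H))
    (hKoop : ∀ h : T.domain, Φ (T h) = fun x => Φ (h : H) (f x))
    (hdommax : ∀ h : H, (∃ g : H, ∀ x, Φ g x = Φ h (f x)) → h ∈ T.domain)
    (w : (Fin d → ℕ) → H)
    (hw : ∀ (α : Fin d → ℕ) (h : H), (inner ℂ (w α) h : ℂ) = mDeriv' α (Φ h) p)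
    (hVpdom : ∀ (n : ℕ) (u : H),
      u ∈ Submodule.span ℂ {u : H | ∃ α : Fin d → ℕ, (∑ i, α i) ≤ n ∧ u = w α} →
        u ∈ T.domain)
    (hVpdense : Dense ((Submodule.span ℂ (Set.range w) : Submodule ℂ H) : Set H)) :
    (∃ M : ℝ, ∀ (n : ℕ) (u : H)
        (hu : u ∈ Submodule.span ℂ {u : H | ∃ α : Fin d → ℕ, (∑ i, α i) ≤ n ∧ u = w α}),
        ‖T ⟨u, hVpdom n u hu⟩‖ ≤ M * ‖u‖) ↔
      (∃ S : H →L[ℂ] H, ∀ h : T.domain, S (h : H) = T h) := by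
  set Vn : ℕ → Submodule ℂ H := fun n =>
    Submodule.span ℂ {u : H | ∃ α : Fin d → ℕ, (∑ i, α i) ≤ n ∧ u = w α} with hVn
  set Vp : Submodule ℂ H := Submodule.span ℂ (Set.range w) with hVp
  -- every element of Vp lies in some Vn
  have hVnmono : Monotone Vn := by
    intro m n hmn
    exact Submodule.span_mono (fun u ⟨α, hα, hu⟩ => ⟨α, hα.trans hmn, hu⟩)
  have hVpVn : ∀ u : H, u ∈ Vp → ∃ n, u ∈ Vn n := by
    intro u hu
    have : Vp ≤ ⨆ n, Vn n := by
      rw [hVp]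
      apply Submodule.span_le.mpr
      rintro x ⟨α, rfl⟩
      exact Submodule.mem_iSup_of_mem (∑ i, α i)
        (Submodule.subset_span ⟨α, le_rfl, rfl⟩)
    have h2 := this hu
    rwa [Submodule.mem_iSup_of_directed _ (hVnmono.directed_le)] at h2
  have hVpsub : ∀ u : H, u ∈ Vp → u ∈ T.domain := by
    intro u hu
    obtain ⟨n, hn⟩ := hVpVn u hu
    exact hVpdom n u hn
  constructor
  · rintro ⟨M, hM⟩
    -- the restriction of T to Vp as a linear map
    have hM' : 0 ≤ max M 0 := le_max_right _ _
    set j : Vp →ₗ[ℂ] T.domain :=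
      { toFun := fun u => ⟨(u : H), hVpsub u u.2⟩
        map_add' := fun u v => rfl
        map_smul' := fun c u => rfl } with hj
    set L : Vp →ₗ[ℂ] H := T.toFun.comp j with hL
    have hLbound : ∀ u : Vp, ‖L u‖ ≤ (max M 0) * ‖u‖ := by
      intro u
      obtain ⟨n, hn⟩ := hVpVn u u.2
      have := hM n u hn
      calc ‖L u‖ = ‖T ⟨(u : H), hVpdom n u hn⟩‖ := rfl
        _ ≤ M * ‖(u : H)‖ := this
        _ ≤ (max M 0) * ‖u‖ := by
            apply mul_le_mul_of_nonneg_right (le_max_left _ _) (norm_nonneg _)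
    set Lc : Vp →L[ℂ] H := L.mkContinuous (max M 0) hLbound with hLc
    have hUI : IsUniformInducing (Vp.subtypeL : Vp →L[ℂ] H) :=
      isometry_subtype_coe.isUniformInducing
    have hDR : DenseRange (Vp.subtypeL : Vp →L[ℂ] H) := by
      simpa [DenseRange, Subtype.range_coe_subtype] using hVpdense
    refine ⟨Lc.extend Vp.subtypeL, ?_⟩
    set S : H →L[ℂ] H := Lc.extend Vp.subtypeL with hS
    have hSVp : ∀ u : Vp, S (u : H) = T ⟨(u : H), hVpsub u u.2⟩ := by
      intro u
      have := ContinuousLinearMap.extend_eq Lc hDR hUI u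
      exact this
    -- adjoint sends kfun x to kfun (f x)
    have hadj : ∀ x, (ContinuousLinearMap.adjoint S) (kfun x) = kfun (f x) := by
      intro x
      refine hVpdense.eq_of_inner_left ℂ (fun v' hv' => ?_)
      obtain ⟨v, rfl⟩ : ∃ v : Vp, (v : H) = v' := ⟨⟨v', hv'⟩, rfl⟩
      rw [ContinuousLinearMap.adjoint_inner_left]
      have h1 : (inner ℂ (kfun x) (S (v : H)) : ℂ) = Φ (T ⟨(v : H), hVpsub v v.2⟩) x := by
        rw [hSVp v, hrepro]
      have h2 : Φ (T ⟨(v : H), hVpsub v v.2⟩) x = Φ (v : H) (f x) :=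
        congrFun (hKoop ⟨(v : H), hVpsub v v.2⟩) x
      rw [h1, h2, hrepro]
    intro h
    apply hinj
    funext x
    rw [hrepro (S (h : H)) x, ← ContinuousLinearMap.adjoint_inner_left, hadj x,
      ← hrepro (h : H) (f x), ← congrFun (hKoop h) x]
  · rintro ⟨S, hSext⟩
    refine ⟨‖S‖, fun n u hu => ?_⟩
    rw [← hSext ⟨u, hVpdom n u hu⟩]
    exact S.le_opNorm u
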